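/- arXiv:1311.0098 — 5 statements merged into one kernel-verified Lean document; each statement's English description precedes it below -/
import Mathlib

section
/- Let ζ be a stochastic process on a probability space (Ω, ℱ, P) indexed by [0,1] such that ζ(·,t) is measurable for each t ∈ [0,1], the sample path ζ(ω,·) is continuous for each ω ∈ Ω, and ζ is a Gaussian process, i.e., for every finite set of points t₁,…,t_k ∈ [0,1] and real coefficients c₁,…,c_k the random variable Σᵢ cᵢ ζ(·,tᵢ) has a (possibly degenerate) Gaussian distribution on ℝ. Then the law of the induced map ζ̃ : Ω → C([0,1],ℝ), ζ̃(ω) = ζ(ω,·), is a Gaussian measure on C([0,1],ℝ): for every continuous linear functional L on C([0,1],ℝ), the pushforward of the law of ζ̃ under L is a (possibly degenerate) Gaussian measure on ℝ. -/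
open MeasureTheory ProbabilityTheory
open scoped NNReal

noncomputable instance : MeasurableSpace C(Set.Icc (0:ℝ) 1, ℝ) := borel _
instance : BorelSpace C(Set.Icc (0:ℝ) 1, ℝ) := ⟨rfl⟩

/-!
Approximating each path by its Bernstein polynomials gives, pointwise on `Ω`,
`L ζ̃ = lim ∑ₖ L(bₙₖ) ζ(·, k/n)`, and every term of this sequence is Gaussian by hypothesis; the same
approximation shows that `ζ̃` is measurable. A pointwise limit of Gaussian random variables is
Gaussian: the characteristic functions `exp(i t mₙ - vₙ t² / 2)` converge to that of the limit,
whose modulus at some `t ≠ 0` determines `lim vₙ`, while tightness of the laws bounds the means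
(a Gaussian charges each side of its mean with mass at least `1/2`), so along a subsequence the
means converge too.
-/

open Set Filter Topology Complex

namespace ProbabilityTheory

lemma gaussianReal_Iic_self_eq_Ici_self (m : ℝ) (v : ℝ≥0) :
    gaussianReal m v (Iic m) = gaussianReal m v (Ici m) := by
  have hsymm : (gaussianReal m v).map (2 * m - ·) = gaussianReal m v := by
    rw [gaussianReal_map_const_sub]; ring_nf
  conv_lhs => rw [← hsymm]
  rw [Measure.map_apply (by fun_prop) measurableSet_Iic]
  congr 1
  ext x
  simp only [mem_preimage, mem_Iic, mem_Ici]
  constructor <;> intro h <;> linarith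

lemma inv_two_le_gaussianReal_Ici_self (m : ℝ) (v : ℝ≥0) :
    2⁻¹ ≤ gaussianReal m v (Ici m) := by
  have h : 1 ≤ gaussianReal m v (Iic m) + gaussianReal m v (Ici m) := by
    calc 1 = gaussianReal m v (Iic m ∪ Ici m) := by rw [Iic_union_Ici, measure_univ]
      _ ≤ _ := measure_union_le _ _
  rw [gaussianReal_Iic_self_eq_Ici_self, ← two_mul] at h
  exact (ENNReal.inv_le_iff_le_mul (by simp) (by simp)).2 h

lemma inv_two_le_gaussianReal_Iic_self (m : ℝ) (v : ℝ≥0) :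
    2⁻¹ ≤ gaussianReal m v (Iic m) :=
  gaussianReal_Iic_self_eq_Ici_self m v ▸ inv_two_le_gaussianReal_Ici_self m v

lemma norm_charFun_gaussianReal (m : ℝ) (v : ℝ≥0) (t : ℝ) :
    ‖charFun (gaussianReal m v) t‖ = Real.exp (-(v * t ^ 2 / 2)) := by
  rw [charFun_gaussianReal, Complex.norm_exp]
  congr 1
  simp [← ofReal_pow]

lemma exists_forall_abs_le_of_isTightMeasureSet_gaussianReal {m : ℕ → ℝ} {v : ℕ → ℝ≥0}
    (h : IsTightMeasureSet (range fun n ↦ gaussianReal (m n) (v n))) :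
    ∃ R, ∀ n, |m n| ≤ R := by
  obtain ⟨K, hK, hKc⟩ :=
    isTightMeasureSet_iff_exists_isCompact_measure_compl_le.1 h 4⁻¹ (by norm_num)
  obtain ⟨R, hR⟩ := hK.isBounded.subset_closedBall 0
  rw [Real.closedBall_eq_Icc, zero_sub, zero_add] at hR
  have hlt : ∀ n, gaussianReal (m n) (v n) Kᶜ < 2⁻¹ := fun n ↦
    (hKc _ ⟨n, rfl⟩).trans_lt (ENNReal.inv_lt_inv.2 (by norm_num))
  refine ⟨R, fun n ↦ abs_le.2 ⟨?_, ?_⟩⟩ <;> by_contra! hm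
  · refine (hlt n).not_ge ((inv_two_le_gaussianReal_Iic_self _ _).trans (measure_mono ?_))
    exact fun x hx hxK ↦ by linarith [(hR hxK).1, mem_Iic.1 hx]
  · refine (hlt n).not_ge ((inv_two_le_gaussianReal_Ici_self _ _).trans (measure_mono ?_))
    exact fun x hx hxK ↦ by linarith [(hR hxK).2, mem_Ici.1 hx]

lemma exists_ne_zero_charFun_ne_zero (μ : Measure ℝ) [IsProbabilityMeasure μ] :
    ∃ t ≠ 0, charFun μ t ≠ 0 := by
  have h0 : charFun μ 0 ≠ 0 := by simp [charFun_zero]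
  exact ((eventually_nhdsWithin_of_forall (s := {0}ᶜ) fun t ht ↦ ht).and
    ((continuous_charFun.continuousAt.mono_left nhdsWithin_le_nhds).eventually_ne h0)).exists

lemma exists_tendsto_variance_of_tendsto_charFun_gaussianReal {μ : Measure ℝ}
    [IsProbabilityMeasure μ] {m : ℕ → ℝ} {v : ℕ → ℝ≥0}
    (h : ∀ t, Tendsto (fun n ↦ charFun (gaussianReal (m n) (v n)) t) atTop (𝓝 (charFun μ t))) :
    ∃ v₀ : ℝ≥0, Tendsto v atTop (𝓝 v₀) := by
  obtain ⟨t, ht, hμt⟩ := exists_ne_zero_charFun_ne_zero μ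
  have hs : t ^ 2 / 2 ≠ 0 := by positivity
  have hexp : Tendsto (fun n ↦ Real.exp (-(v n * t ^ 2 / 2))) atTop (𝓝 ‖charFun μ t‖) := by
    simpa only [norm_charFun_gaussianReal] using (h t).norm
  have hlog := ((Real.continuousAt_log (norm_ne_zero_iff.2 hμt)).tendsto.comp hexp).neg.div_const
    (t ^ 2 / 2)
  simp only [Function.comp_def, Real.log_exp, neg_neg, mul_div_assoc, mul_div_cancel_right₀ _ hs]
    at hlog
  exact ⟨_, by simpa using (tendsto_real_toNNReal hlog)⟩

lemma tendsto_charFun_gaussianReal {m : ℕ → ℝ} {v : ℕ → ℝ≥0} {m₀ : ℝ} {v₀ : ℝ≥0}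
    (hm : Tendsto m atTop (𝓝 m₀)) (hv : Tendsto v atTop (𝓝 v₀)) (t : ℝ) :
    Tendsto (fun n ↦ charFun (gaussianReal (m n) (v n)) t) atTop
      (𝓝 (charFun (gaussianReal m₀ v₀) t)) := by
  simp only [charFun_gaussianReal]
  have hm' : Tendsto (fun n ↦ (m n : ℂ)) atTop (𝓝 (m₀ : ℂ)) :=
    (continuous_ofReal.tendsto _).comp hm
  have hv' : Tendsto (fun n ↦ ((v n : ℝ) : ℂ)) atTop (𝓝 ((v₀ : ℝ) : ℂ)) :=
    (continuous_ofReal.tendsto _).comp (NNReal.tendsto_coe.2 hv)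
  exact (((tendsto_const_nhds.mul hm').mul_const I).sub ((hv'.mul_const _).div_const 2)).cexp

theorem exists_eq_gaussianReal_of_tendsto_charFun {μ : Measure ℝ} [IsProbabilityMeasure μ]
    {m : ℕ → ℝ} {v : ℕ → ℝ≥0}
    (h : ∀ t, Tendsto (fun n ↦ charFun (gaussianReal (m n) (v n)) t) atTop (𝓝 (charFun μ t))) :
    ∃ (m₀ : ℝ) (v₀ : ℝ≥0), μ = gaussianReal m₀ v₀ := by
  obtain ⟨v₀, hv⟩ := exists_tendsto_variance_of_tendsto_charFun_gaussianReal h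
  obtain ⟨R, hR⟩ := exists_forall_abs_le_of_isTightMeasureSet_gaussianReal
    (isTightMeasureSet_of_tendsto_charFun continuous_charFun.continuousAt h)
  obtain ⟨m₀, -, φ, hφ, hm⟩ := tendsto_subseq_of_bounded (Metric.isBounded_Icc (-R) R)
    (fun n ↦ abs_le.1 (hR n))
  exact ⟨m₀, v₀, Measure.ext_of_charFun (funext fun t ↦ tendsto_nhds_unique
    ((h t).comp hφ.tendsto_atTop) (tendsto_charFun_gaussianReal hm (hv.comp hφ.tendsto_atTop) t))⟩

theorem exists_map_eq_gaussianReal_of_tendsto {Ω : Type*} [MeasurableSpace Ω] {P : Measure Ω}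
    [IsProbabilityMeasure P] {S : ℕ → Ω → ℝ} {X : Ω → ℝ} (hS : ∀ n, AEMeasurable (S n) P)
    (hX : AEMeasurable X P) (hlim : ∀ᵐ ω ∂P, Tendsto (fun n ↦ S n ω) atTop (𝓝 (X ω)))
    (hgauss : ∀ n, ∃ (m : ℝ) (v : ℝ≥0), P.map (S n) = gaussianReal m v) :
    ∃ (m : ℝ) (v : ℝ≥0), P.map X = gaussianReal m v := by
  choose m v hmv using hgauss
  have := Measure.isProbabilityMeasure_map hX
  have hcharFun := ProbabilityMeasure.tendsto_iff_tendsto_charFun.1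
    (tendstoInDistribution_of_ae_tendsto hS hX hlim).tendsto
  exact exists_eq_gaussianReal_of_tendsto_charFun fun t ↦ by simpa [hmv] using hcharFun t

end ProbabilityTheory

open bernstein

lemma bernsteinApproximation_eq_sum_smul (n : ℕ) (f : C(unitInterval, ℝ)) :
    bernsteinApproximation n f = ∑ k : Fin (n + 1), f (z k) • bernstein n k := by
  ext x
  simp [bernsteinApproximation.apply, mul_comm]

lemma ContinuousMap.measurable_mk_of_measurable_apply {Ω : Type*} [MeasurableSpace Ω]
    {ζ : Ω → unitInterval → ℝ} (hmeas : ∀ t, Measurable fun ω ↦ ζ ω t)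
    (hcont : ∀ ω, Continuous (ζ ω)) :
    Measurable fun ω ↦ (⟨ζ ω, hcont ω⟩ : C(unitInterval, ℝ)) := by
  refine measurable_of_tendsto_metrizable (fun n ↦ ?_)
    (tendsto_pi_nhds.2 fun ω ↦ bernsteinApproximation_uniform ⟨ζ ω, hcont ω⟩)
  simp only [bernsteinApproximation_eq_sum_smul]
  exact Finset.measurable_sum _ fun k _ ↦ (hmeas _).smul_const _

/-- If `ζ` is a Gaussian process on `[0,1]` with continuous sample paths
(each `ζ(·,t)` measurable), then the law of the induced `C([0,1],ℝ)`-valued random variable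
`ζ̃` is a Gaussian measure: the pushforward of the law under any continuous linear functional
is a (possibly degenerate) Gaussian measure on `ℝ`. -/
theorem stmt1 {Ω : Type*} [MeasurableSpace Ω] (P : Measure Ω) [IsProbabilityMeasure P]
    (ζ : Ω → Set.Icc (0:ℝ) 1 → ℝ)
    (hmeas : ∀ t : Set.Icc (0:ℝ) 1, Measurable fun ω => ζ ω t)
    (hcont : ∀ ω, Continuous (ζ ω))
    (hgauss : ∀ (k : ℕ) (t : Fin k → Set.Icc (0:ℝ) 1) (c : Fin k → ℝ),
      ∃ (m : ℝ) (v : ℝ≥0),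
        P.map (fun ω => ∑ i, c i * ζ ω (t i)) = gaussianReal m v) :
    ∀ L : C(Set.Icc (0:ℝ) 1, ℝ) →L[ℝ] ℝ, ∃ (m : ℝ) (v : ℝ≥0),
      (P.map (fun ω => (⟨ζ ω, hcont ω⟩ : C(Set.Icc (0:ℝ) 1, ℝ)))).map L
        = gaussianReal m v := by
  intro L
  have hpath := ContinuousMap.measurable_mk_of_measurable_apply hmeas hcont
  have hL_bernstein : ∀ n (f : C(unitInterval, ℝ)),
      L (bernsteinApproximation n f) = ∑ k : Fin (n + 1), L (bernstein n k) * f (z k) := by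
    intro n f
    simp [bernsteinApproximation_eq_sum_smul, mul_comm]
  rw [Measure.map_map L.continuous.measurable hpath]
  refine exists_map_eq_gaussianReal_of_tendsto (S := fun n ω ↦ ∑ k : Fin (n + 1),
      L (bernstein n k) * ζ ω (z k)) (fun n ↦ by fun_prop)
    (L.continuous.measurable.comp hpath).aemeasurable (ae_of_all _ fun ω ↦ ?_)
    (fun n ↦ hgauss _ _ _)
  have := (L.continuous.tendsto _).comp (bernsteinApproximation_uniform ⟨ζ ω, hcont ω⟩)
  simpa only [Function.comp_def, hL_bernstein, ContinuousMap.coe_mk] using this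
end

section
/- Let 𝔾 and 𝔽 be real separable Banach spaces and F : 𝔾 → 𝔽 a continuous linear operator. Let X be a 𝔾-valued random variable whose law is Gaussian with finite second moment, mean a and covariance function r, and let ε be an 𝔽-valued random variable, independent of X, whose law is Gaussian with finite second moment, mean 0 and covariance function v. Then the law of the (𝔾 × 𝔽)-valued random variable (X, F(X) + ε) is Gaussian, has mean (a, F(a)), and—identifying the continuous linear functionals on 𝔾 × 𝔽 with pairs (f,g) ∈ 𝔾* × 𝔽* acting as (x,y) ↦ f(x) + g(y)—its covariance function λ satisfies λ((f,g),(f',g')) = r(f + g∘F, f' + g'∘F) + v(g,g') for all f, f' ∈ 𝔾* and g, g' ∈ 𝔽*. -/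
open MeasureTheory ProbabilityTheory
open scoped NNReal

/-!
The law of `(X, F X + ε)` is the image of the law of `(X, ε)` under the continuous linear map
`(x, y) ↦ (x, F x + y)`, and independent Gaussian vectors are jointly Gaussian. For the
covariance, a functional `(f, g)` evaluated at the centred pair is `(f + g ∘ F)(X - a) + g(ε)`;
expanding the product of two such sums, the mixed terms vanish because `X` and `ε` are
independent and `X - a` is centred. All the integrals involved exist since Gaussian laws on
separable Banach spaces have finite moments of every order (Fernique).
-/

/-- A Borel probability measure on a real Banach space is Gaussian if every continuous linear
functional pushes it forward to a (possibly degenerate) Gaussian measure on `ℝ`. -/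
def IsGaussianMeasure {E : Type*} [NormedAddCommGroup E] [NormedSpace ℝ E]
    [MeasurableSpace E] (μ : Measure E) : Prop :=
  ∀ f : E →L[ℝ] ℝ, ∃ (m : ℝ) (v : ℝ≥0), μ.map f = gaussianReal m v

lemma isGaussianMeasure_iff_isGaussian {E : Type*} [NormedAddCommGroup E] [NormedSpace ℝ E]
    [MeasurableSpace E] [OpensMeasurableSpace E] {μ : Measure E} :
    IsGaussianMeasure μ ↔ IsGaussian μ :=
  ⟨isGaussian_of_map_eq_gaussianReal, fun h L => ⟨_, _, h.map_eq_gaussianReal L⟩⟩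

section RandomVariables

variable {Ω : Type*} [MeasurableSpace Ω] {P : Measure Ω}

lemma ProbabilityTheory.HasGaussianLaw.prodMk_map_add_of_indepFun
    {E F : Type*} [NormedAddCommGroup E] [NormedSpace ℝ E] [CompleteSpace E]
    [SecondCountableTopology E] [MeasurableSpace E] [BorelSpace E]
    [NormedAddCommGroup F] [NormedSpace ℝ F] [CompleteSpace F]
    [SecondCountableTopology F] [MeasurableSpace F] [BorelSpace F]
    {X : Ω → E} {Y : Ω → F} (hX : HasGaussianLaw X P) (hY : HasGaussianLaw Y P)
    (hXY : IndepFun X Y P) (T : E →L[ℝ] F) :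
    HasGaussianLaw (fun ω => (X ω, T (X ω) + Y ω)) P :=
  (hXY.hasGaussianLaw hX hY).map_fun
    ((ContinuousLinearMap.fst ℝ E F).prod (T.coprod (ContinuousLinearMap.id ℝ F)))

lemma integral_comp_sub_integral_eq_zero [IsProbabilityMeasure P]
    {E : Type*} [NormedAddCommGroup E] [NormedSpace ℝ E] [CompleteSpace E]
    {X : Ω → E} (hX : Integrable X P) (L : E →L[ℝ] ℝ) :
    ∫ ω, L (X ω - ∫ ω', X ω' ∂P) ∂P = 0 := by
  have hXc : Integrable (fun ω => X ω - ∫ ω', X ω' ∂P) P := hX.sub (integrable_const _)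
  rw [L.integral_comp_comm hXc, integral_sub hX (integrable_const _),
    integral_const, probReal_univ, one_smul, sub_self, map_zero]

lemma integral_add_mul_add_of_indepFun {A B A' B' : Ω → ℝ}
    (hA : MemLp A 2 P) (hB : MemLp B 2 P) (hA' : MemLp A' 2 P) (hB' : MemLp B' 2 P)
    (hAB' : IndepFun A B' P) (hBA' : IndepFun B A' P)
    (hA0 : ∫ ω, A ω ∂P = 0) (hB0 : ∫ ω, B ω ∂P = 0) :
    ∫ ω, (A ω + B ω) * (A' ω + B' ω) ∂P = ∫ ω, A ω * A' ω ∂P + ∫ ω, B ω * B' ω ∂P := by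
  have hAB'0 : ∫ ω, A ω * B' ω ∂P = 0 := by
    rw [hAB'.integral_fun_mul_eq_mul_integral hA.1 hB'.1, hA0, zero_mul]
  have hBA'0 : ∫ ω, B ω * A' ω ∂P = 0 := by
    rw [hBA'.integral_fun_mul_eq_mul_integral hB.1 hA'.1, hB0, zero_mul]
  have hmul {U V : Ω → ℝ} (hU : MemLp U 2 P) (hV : MemLp V 2 P) :
      Integrable (fun ω => U ω * V ω) P :=
    hU.integrable_mul hV
  have hdiag : Integrable (fun ω => A ω * A' ω + B ω * B' ω) P := (hmul hA hA').add (hmul hB hB')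
  have hmixed : Integrable (fun ω => A ω * B' ω + B ω * A' ω) P := (hmul hA hB').add (hmul hB hA')
  calc ∫ ω, (A ω + B ω) * (A' ω + B' ω) ∂P
      = ∫ ω, (A ω * A' ω + B ω * B' ω) + (A ω * B' ω + B ω * A' ω) ∂P := by
        congr with ω
        ring
    _ = ∫ ω, A ω * A' ω ∂P + ∫ ω, B ω * B' ω ∂P := by
        rw [integral_add hdiag hmixed, integral_add (hmul hA hA') (hmul hB hB'),
          integral_add (hmul hA hB') (hmul hB hA'), hAB'0, hBA'0, add_zero, add_zero]

end RandomVariables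

theorem stmt6_general {𝔾 : Type*} [NormedAddCommGroup 𝔾] [NormedSpace ℝ 𝔾] [CompleteSpace 𝔾]
    [TopologicalSpace.SeparableSpace 𝔾] [MeasurableSpace 𝔾] [BorelSpace 𝔾]
    {𝔽 : Type*} [NormedAddCommGroup 𝔽] [NormedSpace ℝ 𝔽] [CompleteSpace 𝔽]
    [TopologicalSpace.SeparableSpace 𝔽] [MeasurableSpace 𝔽] [BorelSpace 𝔽]
    {Ω : Type*} [MeasurableSpace Ω] (P : Measure Ω) [IsProbabilityMeasure P]
    (F : 𝔾 →L[ℝ] 𝔽) (X : Ω → 𝔾) (ε : Ω → 𝔽)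
    (hindep : IndepFun X ε P)
    (hXgauss : IsGaussianMeasure (P.map X)) (hεgauss : IsGaussianMeasure (P.map ε))
    (a : 𝔾) (ha : ∫ ω, X ω ∂P = a) (hε0 : ∫ ω, ε ω ∂P = 0)
    (r : (𝔾 →L[ℝ] ℝ) → (𝔾 →L[ℝ] ℝ) → ℝ)
    (v : (𝔽 →L[ℝ] ℝ) → (𝔽 →L[ℝ] ℝ) → ℝ)
    (hr : ∀ f g : 𝔾 →L[ℝ] ℝ, r f g = ∫ ω, f (X ω - a) * g (X ω - a) ∂P)
    (hv : ∀ f g : 𝔽 →L[ℝ] ℝ, v f g = ∫ ω, f (ε ω) * g (ε ω) ∂P) :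
    IsGaussianMeasure (P.map fun ω => ((X ω, F (X ω) + ε ω) : 𝔾 × 𝔽)) ∧
      (∫ ω, ((X ω, F (X ω) + ε ω) : 𝔾 × 𝔽) ∂P) = (a, F a) ∧
      ∀ (f f' : 𝔾 →L[ℝ] ℝ) (g g' : 𝔽 →L[ℝ] ℝ),
        (∫ ω, (f.coprod g) ((X ω, F (X ω) + ε ω) - (a, F a)) *
            (f'.coprod g') ((X ω, F (X ω) + ε ω) - (a, F a)) ∂P)
          = r (f + g.comp F) (f' + g'.comp F) + v g g' := by
  have hXlaw : HasGaussianLaw X P := ⟨isGaussianMeasure_iff_isGaussian.1 hXgauss⟩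
  have hεlaw : HasGaussianLaw ε P := ⟨isGaussianMeasure_iff_isGaussian.1 hεgauss⟩
  have hXint := hXlaw.integrable
  have hεint := hεlaw.integrable
  refine ⟨isGaussianMeasure_iff_isGaussian.2
    (hXlaw.prodMk_map_add_of_indepFun hεlaw hindep F).isGaussian_map, ?_, fun f f' g g' => ?_⟩
  · rw [integral_pair (g := fun ω => F (X ω) + ε ω) hXint ((F.integrable_comp hXint).add hεint),
      integral_add (F.integrable_comp hXint) hεint, hε0, add_zero, F.integral_comp_comm hXint, ha]
  have hcoord : ∀ (f : 𝔾 →L[ℝ] ℝ) (g : 𝔽 →L[ℝ] ℝ) ω,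
      (f.coprod g) ((X ω, F (X ω) + ε ω) - (a, F a))
        = (f + g.comp F) (X ω - a) + g (ε ω) := by
    intro f g ω
    simp only [Prod.mk_sub_mk, ContinuousLinearMap.coprod_apply, FunLike.coe_add, Pi.add_apply,
      ContinuousLinearMap.comp_apply, map_sub, map_add]
    ring
  have hXc : MemLp (fun ω => X ω - a) 2 P := hXlaw.memLp_two.sub (memLp_const _)
  have hcentre : Measurable fun x : 𝔾 => x - a := measurable_sub_const _
  simp_rw [hcoord, hr, hv]
  exact integral_add_mul_add_of_indepFun ((f + g.comp F).comp_memLp' hXc)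
    (g.comp_memLp' hεlaw.memLp_two) ((f' + g'.comp F).comp_memLp' hXc)
    (g'.comp_memLp' hεlaw.memLp_two)
    (hindep.comp ((f + g.comp F).measurable.comp hcentre) g'.measurable)
    (hindep.comp ((f' + g'.comp F).measurable.comp hcentre) g.measurable).symm
    (ha ▸ integral_comp_sub_integral_eq_zero hXint _)
    (by rw [g.integral_comp_comm hεint, hε0, map_zero])

/-- If `X` is a `𝔾`-valued Gaussian random variable with mean `a` and covariance
function `r`, `ε` is an `𝔽`-valued Gaussian random variable independent of `X` with mean `0`
and covariance function `v`, both with finite second moments, and `F : 𝔾 → 𝔽` is a continuous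
linear operator, then `(X, F(X) + ε)` is Gaussian on `𝔾 × 𝔽` with mean `(a, F(a))` and
covariance function `((f,g),(f',g')) ↦ r(f + g∘F, f' + g'∘F) + v(g,g')`, identifying a
functional on `𝔾 × 𝔽` with a pair `(f,g)` acting as `(x,y) ↦ f(x) + g(y)`. -/
theorem stmt6 {𝔾 : Type*} [NormedAddCommGroup 𝔾] [NormedSpace ℝ 𝔾] [CompleteSpace 𝔾]
    [TopologicalSpace.SeparableSpace 𝔾] [MeasurableSpace 𝔾] [BorelSpace 𝔾]
    {𝔽 : Type*} [NormedAddCommGroup 𝔽] [NormedSpace ℝ 𝔽] [CompleteSpace 𝔽]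
    [TopologicalSpace.SeparableSpace 𝔽] [MeasurableSpace 𝔽] [BorelSpace 𝔽]
    {Ω : Type*} [MeasurableSpace Ω] (P : Measure Ω) [IsProbabilityMeasure P]
    (F : 𝔾 →L[ℝ] 𝔽) (X : Ω → 𝔾) (ε : Ω → 𝔽) (hX : Measurable X) (hε : Measurable ε)
    (hindep : IndepFun X ε P)
    (hXgauss : IsGaussianMeasure (P.map X)) (hεgauss : IsGaussianMeasure (P.map ε))
    (hX2 : Integrable (fun ω => ‖X ω‖ ^ 2) P) (hε2 : Integrable (fun ω => ‖ε ω‖ ^ 2) P)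
    (a : 𝔾) (ha : ∫ ω, X ω ∂P = a) (hε0 : ∫ ω, ε ω ∂P = 0)
    (r : (𝔾 →L[ℝ] ℝ) → (𝔾 →L[ℝ] ℝ) → ℝ)
    (v : (𝔽 →L[ℝ] ℝ) → (𝔽 →L[ℝ] ℝ) → ℝ)
    (hr : ∀ f g : 𝔾 →L[ℝ] ℝ, r f g = ∫ ω, f (X ω - a) * g (X ω - a) ∂P)
    (hv : ∀ f g : 𝔽 →L[ℝ] ℝ, v f g = ∫ ω, f (ε ω) * g (ε ω) ∂P) :
    IsGaussianMeasure (P.map fun ω => ((X ω, F (X ω) + ε ω) : 𝔾 × 𝔽)) ∧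
      (∫ ω, ((X ω, F (X ω) + ε ω) : 𝔾 × 𝔽) ∂P) = (a, F a) ∧
      ∀ (f f' : 𝔾 →L[ℝ] ℝ) (g g' : 𝔽 →L[ℝ] ℝ),
        (∫ ω, (f.coprod g) ((X ω, F (X ω) + ε ω) - (a, F a)) *
            (f'.coprod g') ((X ω, F (X ω) + ε ω) - (a, F a)) ∂P)
          = r (f + g.comp F) (f' + g'.comp F) + v g g' :=
  stmt6_general P F X ε hindep hXgauss hεgauss a ha hε0 r v hr hv
end

section
/- Let E be a real separable Banach space, let (S_n)_{n≥1} and S be standard Borel spaces, and let X : Ω → E, Y_n : Ω → S_n, Y : Ω → S be random variables on a probability space (Ω, ℱ, P). Assume the σ-algebras σ(Y_n) are increasing in n and ⋁_n σ(Y_n) = σ(Y). Let π_n be a regular conditional distribution for X given Y_n, and π a regular conditional distribution for X given Y. Then for P-almost every ω, the sequence of probability measures π_n(Y_n(ω), ·) on E converges weakly to π(Y(ω), ·) as n → ∞. -/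
/-!
For a Borel set `A`, `ω ↦ π_n(Y_n ω)(A)` is a version of `P(X ∈ A | σ(Y_n))`, so Lévy's upward
theorem makes it converge almost surely to `P(X ∈ A | σ(Y)) = π(Y ω)(A)`. Doing this for the
countably many sets of a π-system basis of `E` (finite intersections of a countable basis) gives a
single null set off which the measures converge on the whole π-system; by inclusion–exclusion and
the Portmanteau theorem this already forces weak convergence.
-/

open MeasureTheory Filter Set TopologicalSpace
open scoped Topology

theorem TopologicalSpace.exists_countable_isPiSystem_isTopologicalBasis (α : Type*)
    [TopologicalSpace α] [SecondCountableTopology α] :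
    ∃ S : Set (Set α), S.Countable ∧ IsPiSystem S ∧ IsTopologicalBasis S := by
  refine ⟨sInter '' {f | f.Finite ∧ f ⊆ countableBasis α},
    (countable_ofPred_finite_subset (countable_countableBasis α)).image _, ?_,
    isTopologicalBasis_of_subbasis (eq_generateFrom_countableBasis α)⟩
  rintro _ ⟨f, ⟨hf, hfB⟩, rfl⟩ _ ⟨g, ⟨hg, hgB⟩, rfl⟩ -
  exact ⟨f ∪ g, ⟨hf.union hg, union_subset hfB hgB⟩, sInter_union f g⟩

theorem MeasureTheory.tendsto_integral_of_tendsto_measureReal_of_isPiSystem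
    {E : Type*} [MeasurableSpace E] [TopologicalSpace E] [SecondCountableTopology E]
    [OpensMeasurableSpace E] {S : Set (Set E)} (hSpi : IsPiSystem S) (hSB : IsTopologicalBasis S)
    {μs : ℕ → Measure E} [∀ n, IsProbabilityMeasure (μs n)] {μ : Measure E}
    [IsProbabilityMeasure μ]
    (h : ∀ s ∈ S, Tendsto (fun n => (μs n).real s) atTop (𝓝 (μ.real s)))
    (g : BoundedContinuousFunction E ℝ) :
    Tendsto (fun n => ∫ x, g x ∂μs n) atTop (𝓝 (∫ x, g x ∂μ)) := by
  let νs : ℕ → ProbabilityMeasure E := fun n => ⟨μs n, inferInstance⟩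
  let ν : ProbabilityMeasure E := ⟨μ, inferInstance⟩
  have hweak : Tendsto νs atTop (𝓝 ν) := by
    refine hSpi.tendsto_probabilityMeasure_of_tendsto_of_mem
      (fun s hs => (hSB.isOpen hs).measurableSet) (fun u hu x hx => ?_) fun s hs => ?_
    · obtain ⟨s, hs, hxs, hsu⟩ := hSB.exists_subset_of_mem_open hx hu
      exact ⟨s, hs, (hSB.isOpen hs).mem_nhds hxs, hsu⟩
    · exact NNReal.tendsto_coe.1 (h s hs)
  exact ProbabilityMeasure.tendsto_iff_forall_integral_tendsto.1 hweak g

theorem MeasureTheory.condExp_indicator_preimage_ae_eq_measureReal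
    {Ω S E : Type*} [MeasurableSpace Ω] [MeasurableSpace S] [MeasurableSpace E]
    {P : Measure Ω} [IsFiniteMeasure P] {X : Ω → E} {Y : Ω → S} {π : S → Measure E}
    [∀ y, IsFiniteMeasure (π y)] {A : Set E} (hX : Measurable X) (hY : Measurable Y)
    (hA : MeasurableSet A) (hπA : Measurable fun y => π y A)
    (hπ : ∀ ⦃B : Set S⦄, MeasurableSet B →
      P (Y ⁻¹' B ∩ X ⁻¹' A) = ∫⁻ ω in Y ⁻¹' B, π (Y ω) A ∂P) :
    P[(X ⁻¹' A).indicator 1 | MeasurableSpace.comap Y inferInstance]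
      =ᵐ[P] fun ω => (π (Y ω)).real A := by
  have hlintegral : ∀ s, MeasurableSet[MeasurableSpace.comap Y inferInstance] s →
      ∫⁻ ω in s, π (Y ω) A ∂P = P (s ∩ X ⁻¹' A) := by
    rintro _ ⟨B, hB, rfl⟩
    exact (hπ hB).symm
  have hπYA : Measurable fun ω => π (Y ω) A := hπA.comp hY
  refine (ae_eq_condExp_of_forall_setIntegral_eq (g := fun ω => (π (Y ω)).real A) hY.comap_le
    ((integrable_const 1).indicator (hX hA)) (fun s hs _ => ?_) (fun s hs _ => ?_)
    (hπA.comp (comap_measurable Y)).ennreal_toReal.aestronglyMeasurable).symm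
  · simp only [measureReal_def]
    refine integrable_toReal_of_lintegral_ne_top hπYA.aemeasurable ?_
    rw [hlintegral s hs]
    exact measure_ne_top _ _
  · simp only [measureReal_def]
    rw [integral_toReal hπYA.aemeasurable (ae_of_all _ fun ω => measure_lt_top _ _),
      hlintegral s hs, integral_indicator_one (hX hA), measureReal_restrict_apply (hX hA),
      inter_comm, measureReal_def]

theorem MeasureTheory.ae_tendsto_measureReal_of_iSup_comap_eq
    {Ω E : Type*} [MeasurableSpace Ω] [MeasurableSpace E] {P : Measure Ω} [IsFiniteMeasure P]
    {S : ℕ → Type*} [∀ n, MeasurableSpace (S n)] {S' : Type*} [MeasurableSpace S']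
    {X : Ω → E} {Y : ∀ n, Ω → S n} {Y' : Ω → S'}
    {π : ∀ n, S n → Measure E} {π' : S' → Measure E}
    [∀ n y, IsFiniteMeasure (π n y)] [∀ y, IsFiniteMeasure (π' y)] {A : Set E}
    (hX : Measurable X) (hY : ∀ n, Measurable (Y n))
    (hmono : Monotone fun n => MeasurableSpace.comap (Y n) inferInstance)
    (hsup : (⨆ n, MeasurableSpace.comap (Y n) inferInstance)
      = MeasurableSpace.comap Y' inferInstance)
    (hA : MeasurableSet A) (hπA : ∀ n, Measurable fun y => π n y A)
    (hπ'A : Measurable fun y => π' y A)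
    (hπ : ∀ n ⦃B : Set (S n)⦄, MeasurableSet B →
      P (Y n ⁻¹' B ∩ X ⁻¹' A) = ∫⁻ ω in Y n ⁻¹' B, π n (Y n ω) A ∂P)
    (hπ' : ∀ ⦃B : Set S'⦄, MeasurableSet B →
      P (Y' ⁻¹' B ∩ X ⁻¹' A) = ∫⁻ ω in Y' ⁻¹' B, π' (Y' ω) A ∂P) :
    ∀ᵐ ω ∂P, Tendsto (fun n => (π n (Y n ω)).real A) atTop (𝓝 ((π' (Y' ω)).real A)) := by
  let ℱ : Filtration ℕ ‹MeasurableSpace Ω› :=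
    ⟨fun n => MeasurableSpace.comap (Y n) inferInstance, hmono, fun n => (hY n).comap_le⟩
  have hY' : Measurable Y' := measurable_iff_comap_le.2 (hsup ▸ iSup_le ℱ.le)
  have hlevy := tendsto_ae_condExp (μ := P) (ℱ := ℱ) ((X ⁻¹' A).indicator 1)
  rw [show ⨆ n, ℱ n = MeasurableSpace.comap Y' inferInstance from hsup] at hlevy
  filter_upwards [hlevy, ae_all_iff.2 fun n =>
      condExp_indicator_preimage_ae_eq_measureReal hX (hY n) hA (hπA n) (hπ n),
    condExp_indicator_preimage_ae_eq_measureReal hX hY' hA hπ'A hπ'] with ω hω hωn hω'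
  rw [← hω']
  exact hω.congr hωn

theorem stmt8_general {E : Type*} [NormedAddCommGroup E]
    [TopologicalSpace.SeparableSpace E] [MeasurableSpace E] [BorelSpace E]
    {Ω : Type*} [MeasurableSpace Ω] (P : Measure Ω) [IsProbabilityMeasure P]
    (S : ℕ → Type*) [∀ n, MeasurableSpace (S n)]
    (S' : Type*) [MeasurableSpace S']
    (X : Ω → E) (Y : ∀ n, Ω → S n) (Y' : Ω → S')
    (hX : Measurable X) (hY : ∀ n, Measurable (Y n))
    (hmono : Monotone fun n => MeasurableSpace.comap (Y n) inferInstance)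
    (hsup : (⨆ n, MeasurableSpace.comap (Y n) inferInstance)
      = MeasurableSpace.comap Y' inferInstance)
    (π : ∀ n, S n → Measure E) (π' : S' → Measure E)
    (hπprob : ∀ n y, IsProbabilityMeasure (π n y))
    (hπ'prob : ∀ y, IsProbabilityMeasure (π' y))
    (hπmeas : ∀ n ⦃A : Set E⦄, MeasurableSet A → Measurable fun y => π n y A)
    (hπ'meas : ∀ ⦃A : Set E⦄, MeasurableSet A → Measurable fun y => π' y A)
    (hπrcd : ∀ n ⦃A : Set E⦄, MeasurableSet A → ∀ ⦃B : Set (S n)⦄, MeasurableSet B →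
      P (Y n ⁻¹' B ∩ X ⁻¹' A) = ∫⁻ ω in Y n ⁻¹' B, π n (Y n ω) A ∂P)
    (hπ'rcd : ∀ ⦃A : Set E⦄, MeasurableSet A → ∀ ⦃B : Set S'⦄, MeasurableSet B →
      P (Y' ⁻¹' B ∩ X ⁻¹' A) = ∫⁻ ω in Y' ⁻¹' B, π' (Y' ω) A ∂P) :
    ∀ᵐ ω ∂P, ∀ g : BoundedContinuousFunction E ℝ,
      Tendsto (fun n => ∫ x, g x ∂π n (Y n ω)) atTop (𝓝 (∫ x, g x ∂π' (Y' ω))) := by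
  obtain ⟨𝒮, h𝒮, h𝒮pi, h𝒮basis⟩ := exists_countable_isPiSystem_isTopologicalBasis E
  have hconv : ∀ᵐ ω ∂P, ∀ s ∈ 𝒮,
      Tendsto (fun n => (π n (Y n ω)).real s) atTop (𝓝 ((π' (Y' ω)).real s)) :=
    (ae_ball_iff h𝒮).2 fun s hs =>
      have hsA : MeasurableSet s := (h𝒮basis.isOpen hs).measurableSet
      ae_tendsto_measureReal_of_iSup_comap_eq hX hY hmono hsup hsA (fun n => hπmeas n hsA)
        (hπ'meas hsA) (fun n => hπrcd n hsA) (hπ'rcd hsA)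
  filter_upwards [hconv] with ω hω g
  exact tendsto_integral_of_tendsto_measureReal_of_isPiSystem h𝒮pi h𝒮basis hω g

/-- Let `X` be an `E`-valued random variable (`E` a real separable Banach space),
`Y_n` and `Y` random variables with values in standard Borel spaces, with `σ(Y_n)` increasing
and `⋁_n σ(Y_n) = σ(Y)`. If `π_n` is a regular conditional distribution of `X` given `Y_n` and
`π` one of `X` given `Y`, then for `P`-a.e. `ω`, `π_n(Y_n(ω), ·)` converges weakly to
`π(Y(ω), ·)`. -/
theorem stmt8 {E : Type*} [NormedAddCommGroup E] [NormedSpace ℝ E] [CompleteSpace E]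
    [TopologicalSpace.SeparableSpace E] [MeasurableSpace E] [BorelSpace E]
    {Ω : Type*} [MeasurableSpace Ω] (P : Measure Ω) [IsProbabilityMeasure P]
    (S : ℕ → Type*) [∀ n, MeasurableSpace (S n)] [∀ n, StandardBorelSpace (S n)]
    (S' : Type*) [MeasurableSpace S'] [StandardBorelSpace S']
    (X : Ω → E) (Y : ∀ n, Ω → S n) (Y' : Ω → S')
    (hX : Measurable X) (hY : ∀ n, Measurable (Y n)) (hY' : Measurable Y')
    (hmono : Monotone fun n => MeasurableSpace.comap (Y n) inferInstance)
    (hsup : (⨆ n, MeasurableSpace.comap (Y n) inferInstance)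
      = MeasurableSpace.comap Y' inferInstance)
    (π : ∀ n, S n → Measure E) (π' : S' → Measure E)
    (hπprob : ∀ n y, IsProbabilityMeasure (π n y))
    (hπ'prob : ∀ y, IsProbabilityMeasure (π' y))
    (hπmeas : ∀ n ⦃A : Set E⦄, MeasurableSet A → Measurable fun y => π n y A)
    (hπ'meas : ∀ ⦃A : Set E⦄, MeasurableSet A → Measurable fun y => π' y A)
    (hπrcd : ∀ n ⦃A : Set E⦄, MeasurableSet A → ∀ ⦃B : Set (S n)⦄, MeasurableSet B →
      P (Y n ⁻¹' B ∩ X ⁻¹' A) = ∫⁻ ω in Y n ⁻¹' B, π n (Y n ω) A ∂P)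
    (hπ'rcd : ∀ ⦃A : Set E⦄, MeasurableSet A → ∀ ⦃B : Set S'⦄, MeasurableSet B →
      P (Y' ⁻¹' B ∩ X ⁻¹' A) = ∫⁻ ω in Y' ⁻¹' B, π' (Y' ω) A ∂P) :
    ∀ᵐ ω ∂P, ∀ g : BoundedContinuousFunction E ℝ,
      Tendsto (fun n => ∫ x, g x ∂π n (Y n ω)) atTop (𝓝 (∫ x, g x ∂π' (Y' ω))) :=
  stmt8_general P S S' X Y Y' hX hY hmono hsup π π' hπprob hπ'prob hπmeas hπ'meas hπrcd hπ'rcd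
end

section
/- Let (μ_n) be a sequence of (possibly degenerate) Gaussian probability measures on ℝ, i.e., each μ_n is the Gaussian measure with some mean m_n ∈ ℝ and variance v_n ≥ 0 (a Dirac mass when v_n = 0). If μ_n converges weakly to a probability measure μ on ℝ, then μ is a (possibly degenerate) Gaussian measure: there exist m ∈ ℝ and v ≥ 0 such that μ is the Gaussian measure with mean m and variance v. -/
/-!
Weak convergence of probability measures on `ℝ` is Lévy convergence of characteristic functions,
and `exp (i t m - v t² / 2)` depends continuously on `(m, v)`, so the Gaussian law is a continuous
function of its parameters. A weakly convergent sequence puts mass `> 1/2` on some fixed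
`(-R, R)` eventually. Since a Gaussian gives mass at most `1/2` to each side of its mean, and at
most `(b - a) / √(2πv)` to an interval `(a, b)`, the parameters then lie in a compact set `K`.
The image of `K` is compact, hence closed, so it contains the limit.
-/

open MeasureTheory ProbabilityTheory Filter Set
open scoped NNReal ENNReal Topology

noncomputable def gaussianProbabilityMeasure (p : ℝ × ℝ≥0) : ProbabilityMeasure ℝ :=
  ⟨gaussianReal p.1 p.2, inferInstance⟩

lemma continuous_gaussianProbabilityMeasure : Continuous gaussianProbabilityMeasure := by
  refine continuous_iff_seqContinuous.2 fun p q hpq => ?_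
  refine ProbabilityMeasure.tendsto_iff_tendsto_charFun.2 fun t => ?_
  have hcont : Continuous fun p : ℝ × ℝ≥0 =>
      Complex.exp (t * p.1 * Complex.I - ((p.2 : ℝ) : ℂ) * t ^ 2 / 2) := by fun_prop
  simp only [Function.comp_apply, gaussianProbabilityMeasure, ProbabilityMeasure.coe_mk,
    charFun_gaussianReal]
  exact (hcont.tendsto q).comp hpq

lemma gaussianReal_Iio_self_eq_Ioi_self (m : ℝ) (v : ℝ≥0) :
    gaussianReal m v (Iio m) = gaussianReal m v (Ioi m) := by
  conv_lhs => rw [← show (gaussianReal m v).map (2 * m - ·) = gaussianReal m v by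
    rw [gaussianReal_map_const_sub]; ring_nf]
  rw [Measure.map_apply (by fun_prop) measurableSet_Iio]
  congr 1
  ext x
  simp only [mem_preimage, mem_Iio, mem_Ioi]
  constructor <;> intro h <;> linarith

lemma gaussianReal_Ioi_self_le_half (m : ℝ) (v : ℝ≥0) : gaussianReal m v (Ioi m) ≤ 1 / 2 := by
  have hunion : gaussianReal m v (Iio m) + gaussianReal m v (Ioi m) ≤ 1 := by
    rw [← measure_union Iio_disjoint_Ioi_same measurableSet_Ioi]
    exact prob_le_one
  rw [ENNReal.le_div_iff_mul_le (by simp) (by simp), mul_two]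
  rwa [gaussianReal_Iio_self_eq_Ioi_self] at hunion

lemma gaussianReal_Iio_self_le_half (m : ℝ) (v : ℝ≥0) : gaussianReal m v (Iio m) ≤ 1 / 2 :=
  gaussianReal_Iio_self_eq_Ioi_self m v ▸ gaussianReal_Ioi_self_le_half m v

lemma mem_Ioo_of_half_lt_gaussianReal {m a b : ℝ} {v : ℝ≥0}
    (h : 1 / 2 < gaussianReal m v (Ioo a b)) : m ∈ Ioo a b := by
  by_contra hm
  rcases not_and_or.1 hm with ha | hb
  · refine (gaussianReal_Ioi_self_le_half m v).not_gt (h.trans_le (measure_mono ?_))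
    exact Ioo_subset_Ioi_self.trans (Ioi_subset_Ioi (not_lt.1 ha))
  · refine (gaussianReal_Iio_self_le_half m v).not_gt (h.trans_le (measure_mono ?_))
    exact Ioo_subset_Iio_self.trans (Iio_subset_Iio (not_lt.1 hb))

lemma gaussianPDFReal_le_inv_sqrt (m : ℝ) (v : ℝ≥0) (x : ℝ) :
    gaussianPDFReal m v x ≤ (√(2 * Real.pi * v))⁻¹ := by
  rw [gaussianPDFReal]
  refine mul_le_of_le_one_right (by positivity) (Real.exp_le_one_iff.2 ?_)
  exact div_nonpos_of_nonpos_of_nonneg (neg_nonpos.2 (sq_nonneg _)) (by positivity)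

lemma gaussianReal_Ioo_le {v : ℝ≥0} (hv : v ≠ 0) (m a b : ℝ) :
    gaussianReal m v (Ioo a b) ≤ ENNReal.ofReal ((b - a) / √(2 * Real.pi * v)) := by
  calc gaussianReal m v (Ioo a b)
      ≤ ∫⁻ _ in Ioo a b, ENNReal.ofReal (√(2 * Real.pi * v))⁻¹ := by
        rw [gaussianReal_apply _ hv]
        exact setLIntegral_mono measurable_const fun x _ =>
          ENNReal.ofReal_le_ofReal (gaussianPDFReal_le_inv_sqrt m v x)
    _ = ENNReal.ofReal ((b - a) / √(2 * Real.pi * v)) := by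
        rw [setLIntegral_const, Real.volume_Ioo, ← ENNReal.ofReal_mul (by positivity),
          div_eq_inv_mul]

lemma variance_le_of_half_lt_gaussianReal {m a b : ℝ} {v : ℝ≥0}
    (h : 1 / 2 < gaussianReal m v (Ioo a b)) : (v : ℝ) ≤ (b - a) ^ 2 := by
  rcases eq_or_ne v 0 with rfl | hv
  · simpa using sq_nonneg (b - a)
  have hlt : 1 / 2 < (b - a) / √(2 * Real.pi * v) := by
    have := h.trans_le (gaussianReal_Ioo_le hv m a b)
    rwa [← ENNReal.ofReal_one, ← ENNReal.ofReal_ofNat, ← ENNReal.ofReal_div_of_pos (by norm_num),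
      ENNReal.ofReal_lt_ofReal_iff_of_nonneg (by norm_num)] at this
  have hpos : 0 < √(2 * Real.pi * v) := by
    have : (0 : ℝ) < v := by positivity
    positivity
  rw [lt_div_iff₀ hpos] at hlt
  have hsq := Real.sq_sqrt (by positivity : (0 : ℝ) ≤ 2 * Real.pi * v)
  nlinarith [Real.pi_gt_three, v.coe_nonneg]

lemma exists_half_lt_measure_Ioo (μ : Measure ℝ) [IsProbabilityMeasure μ] :
    ∃ R : ℝ, 1 / 2 < μ (Ioo (-R) R) := by
  have htend : Tendsto (fun n : ℕ => μ (Metric.ball 0 n)) atTop (𝓝 1) := by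
    rw [← measure_univ (μ := μ), ← Metric.iUnion_ball_nat 0]
    exact tendsto_measure_iUnion_atTop fun i j hij =>
      Metric.ball_subset_ball (by exact_mod_cast hij)
  have hhalf : (1 : ℝ≥0∞) / 2 < 1 := ENNReal.half_lt_self one_ne_zero ENNReal.one_ne_top
  obtain ⟨n, hn⟩ := (htend.eventually (eventually_gt_nhds hhalf)).exists
  exact ⟨n, by rwa [← Real.ball_zero_eq_Ioo]⟩

/-- A weak limit of (possibly degenerate) Gaussian probability measures on `ℝ`
is a (possibly degenerate) Gaussian measure. -/
theorem stmt9 (m : ℕ → ℝ) (v : ℕ → ℝ≥0) (μ : Measure ℝ) [IsProbabilityMeasure μ]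
    (hconv : ∀ g : BoundedContinuousFunction ℝ ℝ,
      Tendsto (fun n => ∫ x, g x ∂gaussianReal (m n) (v n)) atTop (𝓝 (∫ x, g x ∂μ))) :
    ∃ (m₀ : ℝ) (v₀ : ℝ≥0), μ = gaussianReal m₀ v₀ := by
  have htend : Tendsto (fun n => gaussianProbabilityMeasure (m n, v n)) atTop
      (𝓝 ⟨μ, inferInstance⟩) :=
    ProbabilityMeasure.tendsto_iff_forall_integral_tendsto.2 hconv
  obtain ⟨R, hR⟩ := exists_half_lt_measure_Ioo μ
  have hmass : ∀ᶠ n in atTop, 1 / 2 < gaussianReal (m n) (v n) (Ioo (-R) R) :=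
    eventually_lt_of_lt_liminf
      (hR.trans_le (ProbabilityMeasure.le_liminf_measure_open_of_tendsto htend isOpen_Ioo))
  let K : Set (ℝ × ℝ≥0) := Icc (-R) R ×ˢ Icc 0 ((R - -R) ^ 2).toNNReal
  have hK : IsCompact K := isCompact_Icc.prod isCompact_Icc
  have hmem : ∀ᶠ n in atTop, gaussianProbabilityMeasure (m n, v n) ∈
      gaussianProbabilityMeasure '' K :=
    hmass.mono fun n hn => ⟨(m n, v n), ⟨Ioo_subset_Icc_self (mem_Ioo_of_half_lt_gaussianReal hn),
      zero_le, (Real.le_toNNReal_iff_coe_le (sq_nonneg _)).2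
        (variance_le_of_half_lt_gaussianReal hn)⟩, rfl⟩
  obtain ⟨p, -, hp⟩ :=
    (hK.image continuous_gaussianProbabilityMeasure).isClosed.mem_of_tendsto htend hmem
  exact ⟨p.1, p.2, congrArg Subtype.val hp.symm⟩
end

section
/- Let E be a real separable Banach space and μ a Borel probability measure on E with finite second moment (∫‖x‖² dμ(x) < ∞) and mean m = ∫ x dμ(x). Then there exists a unique continuous linear operator Λ : E* → E such that f(Λ(g)) = ∫ f(x−m) g(x−m) dμ(x) for all f, g ∈ E*. -/
open MeasureTheory

/-- A Borel probability measure `μ` on a real separable Banach space `E` with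
finite second moment and mean `m` admits a unique continuous linear covariance operator
`Λ : E* → E` with `f(Λ(g)) = ∫ f(x−m) g(x−m) dμ(x)` for all `f, g ∈ E*`. -/
theorem stmt12 {E : Type*} [NormedAddCommGroup E] [NormedSpace ℝ E] [CompleteSpace E]
    [TopologicalSpace.SeparableSpace E] [MeasurableSpace E] [BorelSpace E]
    (μ : Measure E) [IsProbabilityMeasure μ]
    (h2 : Integrable (fun x => ‖x‖ ^ 2) μ) (m : E) (hm : ∫ x, x ∂μ = m) :
    ∃! Λ : (E →L[ℝ] ℝ) →L[ℝ] E,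
      ∀ f g : E →L[ℝ] ℝ, f (Λ g) = ∫ x, f (x - m) * g (x - m) ∂μ := by
  have hE2 : Integrable (fun x => ‖x - m‖ ^ 2) μ := by
    refine Integrable.mono' ((h2.const_mul 2).add (integrable_const (2 * ‖m‖ ^ 2))) ?_ ?_
    · exact ((continuous_norm.comp (continuous_id.sub continuous_const)).pow 2).aestronglyMeasurable
    · filter_upwards with x
      have h1 : ‖x - m‖ ≤ ‖x‖ + ‖m‖ := norm_sub_le x m
      have h0 : (0:ℝ) ≤ ‖x - m‖ := norm_nonneg _
      rw [Real.norm_of_nonneg (by positivity)]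
      simp only [Pi.add_apply]
      nlinarith [mul_le_mul h1 h1 h0 (by positivity : (0:ℝ) ≤ ‖x‖ + ‖m‖), sq_nonneg (‖x‖ - ‖m‖)]
  have key : ∀ g : E →L[ℝ] ℝ, Integrable (fun x => g (x - m) • (x - m)) μ := by
    intro g
    refine Integrable.mono' (hE2.const_mul ‖g‖) ?_ ?_
    · exact ((g.continuous.comp (continuous_id.sub continuous_const)).smul
        (continuous_id.sub continuous_const)).aestronglyMeasurable
    · filter_upwards with x
      rw [norm_smul]
      calc ‖g (x - m)‖ * ‖x - m‖ ≤ (‖g‖ * ‖x - m‖) * ‖x - m‖ := by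
            gcongr; exact g.le_opNorm _
        _ = ‖g‖ * ‖x - m‖ ^ 2 := by ring
  let L : (E →L[ℝ] ℝ) →ₗ[ℝ] E :=
    { toFun := fun g => ∫ x, g (x - m) • (x - m) ∂μ
      map_add' := fun g₁ g₂ => by
        simp only [ContinuousLinearMap.add_apply, add_smul]
        exact integral_add (key g₁) (key g₂)
      map_smul' := fun c g => by
        simp only [ContinuousLinearMap.smul_apply, smul_eq_mul, RingHom.id_apply]
        rw [← integral_smul]
        congr 1
        funext x
        rw [smul_smul] }
  let Λ : (E →L[ℝ] ℝ) →L[ℝ] E :=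
    LinearMap.mkContinuous L (∫ x, ‖x - m‖ ^ 2 ∂μ) (fun g => by
      calc ‖∫ x, g (x - m) • (x - m) ∂μ‖ ≤ ∫ x, ‖g (x - m) • (x - m)‖ ∂μ :=
            norm_integral_le_integral_norm _
        _ ≤ ∫ x, ‖g‖ * ‖x - m‖ ^ 2 ∂μ := by
            refine integral_mono (key g).norm (hE2.const_mul _) (fun x => ?_)
            rw [norm_smul]
            calc ‖g (x - m)‖ * ‖x - m‖ ≤ (‖g‖ * ‖x - m‖) * ‖x - m‖ := by
                  gcongr; exact g.le_opNorm _
              _ = ‖g‖ * ‖x - m‖ ^ 2 := by ring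
        _ = (∫ x, ‖x - m‖ ^ 2 ∂μ) * ‖g‖ := by rw [integral_const_mul]; ring)
  have main : ∀ f g : E →L[ℝ] ℝ, f (Λ g) = ∫ x, f (x - m) * g (x - m) ∂μ := by
    intro f g
    have : f (Λ g) = ∫ x, f (g (x - m) • (x - m)) ∂μ :=
      (ContinuousLinearMap.integral_comp_comm f (key g)).symm
    rw [this]
    congr 1
    funext x
    rw [_root_.map_smul, smul_eq_mul, mul_comm]
  refine ⟨Λ, main, fun Λ' h => ?_⟩
  ext g
  have : ∀ f : E →L[ℝ] ℝ, f (Λ' g) = f (Λ g) := fun f => (h f g).trans (main f g).symm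
  exact (NormedSpace.eq_iff_forall_dual_eq ℝ).mpr this
end
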